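/- Compact embedding of the Hilbert brick into the space of analytic Hamiltonians. Let n ≥ 1 and let 0 < s < 1 satisfy √n·s² < 1. For every h = (h_k)_{k≥1} in the Hilbert brick HB^ℕ, the series Σ_{k≥1} h_k(I(z)) converges uniformly on the closed ball D_s of radius s in ℂ^{2n} and defines a function ι(h) ∈ A_s with ‖ι(h)‖_s ≤ (√n·s²)/(1 − √n·s²). The map ι : HB^ℕ → (A_s, ‖·‖_s) is continuous when HB^ℕ carries the product topology; consequently ι(HB^ℕ) is a compact subset of A_s, and the pushforward ι_*μ of the product probability measure μ is a compactly supported Borel probability measure on the Banach space A_s. -/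

import Mathlib

open Metric Set Filter MeasureTheory

noncomputable section

/-- Real phase space `ℝⁿ × ℝⁿ`. -/
abbrev RPhase (n : ℕ) := (Fin n → ℝ) × (Fin n → ℝ)

/-- Complex phase space `ℂⁿ × ℂⁿ`. -/
abbrev CPhase (n : ℕ) := (Fin n → ℂ) × (Fin n → ℂ)

/-- Embedding of the real phase space in the complex one. -/
def embedR {n : ℕ} (z : RPhase n) : CPhase n :=
  (fun j => (z.1 j : ℂ), fun j => (z.2 j : ℂ))

/-- The formal actions, extended to the complex phase space. -/
def cactions {n : ℕ} (z : CPhase n) : Fin n → ℂ := fun j => ((z.1 j) ^ 2 + (z.2 j) ^ 2) / 2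

/-- `F` is real-valued at the real points of the set `S`. -/
def RealOnRealOn {n : ℕ} (F : CPhase n → ℂ) (S : Set (CPhase n)) : Prop :=
  ∀ w : RPhase n, embedR w ∈ S → (F (embedR w)).im = 0

/-- The space of homogeneous polynomials of degree `k` in `n` variables, encoded by their
coefficients indexed by monomials, i.e. by multisets of `k` variables. -/
abbrev HomPoly (n k : ℕ) := Sym (Fin n) k → ℝ

/-- The multinomial coefficient `C_k^l = k!/(l₁!⋯lₙ!)` of a monomial of degree `k`. -/
def multinomCoeff {n k : ℕ} (m : Sym (Fin n) k) : ℕ :=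
  Nat.multinomial Finset.univ fun i => Multiset.count i (m : Multiset (Fin n))

/-- Square of the Bombieri norm `‖P‖_k = (Σ_{|l|=k} |p_l|²/C_k^l)^{1/2}`. -/
def bombieriNormSq {n k : ℕ} (p : HomPoly n k) : ℝ :=
  ∑ m : Sym (Fin n) k, (p m) ^ 2 / (multinomCoeff m : ℝ)

/-- Evaluation of a homogeneous polynomial at a complex point. -/
def evalHomC {n k : ℕ} (p : HomPoly n k) (I : Fin n → ℂ) : ℂ :=
  ∑ m : Sym (Fin n) k, (p m : ℂ) * ∏ i, I i ^ Multiset.count i (m : Multiset (Fin n))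

/-- The unit ball of the Bombieri norm on `HomPoly n k`. -/
def bombieriUnitBall (n k : ℕ) : Set (HomPoly n k) := {p | bombieriNormSq p ≤ 1}

/-- `μ_k`: the uniform (normalized Lebesgue) probability measure on the unit Bombieri
ball of the space of homogeneous polynomials of degree `k` in `n` variables. -/
def muk (n k : ℕ) : Measure (HomPoly n k) :=
  (volume (bombieriUnitBall n k))⁻¹ • volume.restrict (bombieriUnitBall n k)

/-! Cauchy–Schwarz for the Bombieri norm gives `‖h_k(I)‖ ≤ ‖h_k‖_k (√n ‖I‖_∞)^k`, so on the brick
`Σ_k h_k` is a power series in the actions with radius at least `1/√n`. The quadratic map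
`z ↦ I(z)` sends `D_s` into the polydisc of radius `s² < 1/√n`, so the composite is holomorphic
there, and the geometric majorant `(√n s²)^k` gives uniform convergence and the sup bound.
That majorant is uniform in `h`, so `ι` is a uniform limit on the brick of continuous maps of
finitely many coordinates, hence continuous for the product topology. The brick is compact
(Tychonoff) and carries the full `μ`-measure, so `ι_*μ` is a probability measure supported on the
compact set `ι(HB^ℕ)`. -/

/-- The Hilbert brick `HB^ℕ`; `h k` is the component of degree `k + 1`. -/
def hilbertBrick (n : ℕ) : Set (∀ k : ℕ, HomPoly n (k + 1)) :=
  {h | ∀ k, bombieriNormSq (h k) ≤ 1}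

section Bombieri

variable {n k : ℕ}

lemma sum_multinomCoeff : ∑ m : Sym (Fin n) k, (multinomCoeff m : ℝ) = (n : ℝ) ^ k := by
  classical
  have h := Finset.sum_pow (s := (Finset.univ : Finset (Fin n))) (fun _ => (1 : ℝ)) k
  simp only [Finset.sum_const, Finset.card_univ, Fintype.card_fin, nsmul_eq_mul, mul_one,
    Finset.sym_univ, Multiset.map_const', Multiset.prod_replicate, one_pow] at h
  rw [h]
  refine Finset.sum_congr rfl fun m _ => ?_
  rw [multinomCoeff, Multiset.countPerms,
    Finsupp.multinomial_eq_of_support_subset (Finset.subset_univ _)]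
  rfl

lemma sqrt_natCast_pow (n k : ℕ) : Real.sqrt ((n : ℝ) ^ k) = Real.sqrt n ^ k := by
  rw [Real.sqrt_eq_iff_mul_self_eq (by positivity) (by positivity), ← mul_pow,
    Real.mul_self_sqrt n.cast_nonneg]

lemma sum_abs_le_sqrt_bombieriNormSq (p : HomPoly n k) :
    ∑ m, |p m| ≤ Real.sqrt (bombieriNormSq p) * Real.sqrt n ^ k := by
  have hC : ∀ m : Sym (Fin n) k, (0 : ℝ) < multinomCoeff m := fun m => by
    exact_mod_cast Nat.multinomial_pos _ _
  -- Cauchy–Schwarz for `|p m| = (|p m| / √C_m) · √C_m`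
  calc ∑ m, |p m| = ∑ m, |p m| / Real.sqrt (multinomCoeff m) * Real.sqrt (multinomCoeff m) :=
        Finset.sum_congr rfl fun m _ => (div_mul_cancel₀ _ (Real.sqrt_pos.2 (hC m)).ne').symm
    _ ≤ Real.sqrt (∑ m, (|p m| / Real.sqrt (multinomCoeff m)) ^ 2) *
        Real.sqrt (∑ m, Real.sqrt (multinomCoeff m) ^ 2) := Real.sum_mul_le_sqrt_mul_sqrt _ _ _
    _ = Real.sqrt (bombieriNormSq p) * Real.sqrt n ^ k := by
        simp only [div_pow, sq_abs, Real.sq_sqrt (hC _).le, sum_multinomCoeff, sqrt_natCast_pow]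
        rfl

end Bombieri

section SymEnum

variable {α : Type*} {k : ℕ}

def Sym.enum (m : Sym α k) : Fin k → α :=
  fun j => (m : Multiset α).toList[j.1]'(by simp)

lemma Sym.prod_enum {M : Type*} [CommMonoid M] [DecidableEq α] [Fintype α] (m : Sym α k)
    (x : α → M) : ∏ j, x (m.enum j) = ∏ i, x i ^ Multiset.count i (m : Multiset α) := by
  set l := (m : Multiset α).toList
  calc ∏ j, x (m.enum j) = ∏ j : Fin l.length, x l[j.1] :=
        Fin.prod_congr' (fun j : Fin l.length => x l[j.1]) (by simp [l])
    _ = ((m : Multiset α).map x).prod := by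
        rw [Fin.prod_univ_fun_getElem, ← Multiset.prod_coe, ← Multiset.map_coe,
          Multiset.coe_toList]
    _ = ∏ i, x i ^ Multiset.count i (m : Multiset α) := by
        rw [Finset.prod_multiset_map_count]
        refine Finset.prod_subset (Finset.subset_univ _) fun i _ hi => ?_
        rw [Multiset.count_eq_zero_of_notMem (by simpa using hi), pow_zero]

end SymEnum

section PowerSeries

variable {n k : ℕ}

def HomPoly.toMultilinear (p : HomPoly n k) :
    ContinuousMultilinearMap ℂ (fun _ : Fin k => Fin n → ℂ) ℂ :=
  ∑ m, (p m : ℂ) • (ContinuousMultilinearMap.mkPiAlgebra ℂ (Fin k) ℂ).compContinuousLinearMap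
    fun j => ContinuousLinearMap.proj (m.enum j)

lemma HomPoly.toMultilinear_apply (p : HomPoly n k) (v : Fin k → Fin n → ℂ) :
    p.toMultilinear v = ∑ m, (p m : ℂ) * ∏ j, v j (m.enum j) := by
  simp [HomPoly.toMultilinear]

lemma HomPoly.toMultilinear_apply_const (p : HomPoly n k) (I : Fin n → ℂ) :
    p.toMultilinear (fun _ => I) = evalHomC p I := by
  simp only [HomPoly.toMultilinear_apply, Sym.prod_enum, evalHomC]

lemma HomPoly.norm_toMultilinear_le (p : HomPoly n k) :
    ‖p.toMultilinear‖ ≤ Real.sqrt (bombieriNormSq p) * Real.sqrt n ^ k := by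
  refine ContinuousMultilinearMap.opNorm_le_bound (by positivity) fun v => ?_
  calc ‖p.toMultilinear v‖ ≤ ∑ m, |p m| * ∏ j, ‖v j‖ := by
        rw [p.toMultilinear_apply]
        refine (norm_sum_le _ _).trans (Finset.sum_le_sum fun m _ => ?_)
        rw [norm_mul, norm_prod, Complex.norm_real, Real.norm_eq_abs]
        gcongr with j
        exact norm_le_pi_norm (v j) _
    _ ≤ Real.sqrt (bombieriNormSq p) * Real.sqrt n ^ k * ∏ j, ‖v j‖ := by
        rw [← Finset.sum_mul]
        gcongr
        exact sum_abs_le_sqrt_bombieriNormSq p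

lemma norm_evalHomC_le (p : HomPoly n k) (I : Fin n → ℂ) :
    ‖evalHomC p I‖ ≤ Real.sqrt (bombieriNormSq p) * (Real.sqrt n * ‖I‖) ^ k := by
  rw [← p.toMultilinear_apply_const, mul_pow, ← mul_assoc]
  exact (p.toMultilinear.le_opNorm_mul_pow_of_le (pi_norm_const_le I)).trans
    (by gcongr; exact p.norm_toMultilinear_le)

end PowerSeries

section Hamiltonian

variable {n : ℕ} {h : ∀ k : ℕ, HomPoly n (k + 1)}

def hamiltonianSeries (h : ∀ k : ℕ, HomPoly n (k + 1)) :
    FormalMultilinearSeries ℂ (Fin n → ℂ) ℂ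
  | 0 => 0
  | k + 1 => (h k).toMultilinear

lemma norm_hamiltonianSeries_le (hb : h ∈ hilbertBrick n) (k : ℕ) :
    ‖hamiltonianSeries h k‖ ≤ Real.sqrt n ^ k := by
  cases k with
  | zero => simp [hamiltonianSeries]
  | succ k =>
    refine (h k).norm_toMultilinear_le.trans (mul_le_of_le_one_left (by positivity) ?_)
    exact Real.sqrt_le_one.2 (hb k)

lemma ofReal_inv_sqrt_le_radius_hamiltonianSeries (hn : 0 < n) (hb : h ∈ hilbertBrick n) :
    ENNReal.ofReal (Real.sqrt n)⁻¹ ≤ (hamiltonianSeries h).radius := by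
  refine (hamiltonianSeries h).le_radius_of_bound 1 fun k => ?_
  have hsqrt : Real.sqrt n ≠ 0 := by positivity
  calc ‖hamiltonianSeries h k‖ * ((Real.sqrt n)⁻¹.toNNReal : ℝ) ^ k
      ≤ Real.sqrt n ^ k * (Real.sqrt n)⁻¹ ^ k := by
        rw [Real.coe_toNNReal _ (by positivity)]
        gcongr
        exact norm_hamiltonianSeries_le hb k
    _ = 1 := by rw [← mul_pow, mul_inv_cancel₀ hsqrt, one_pow]

lemma tsum_evalHomC_eq_sum_hamiltonianSeries (I : Fin n → ℂ) :
    ∑' k, evalHomC (h k) I = (hamiltonianSeries h).sum I := by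
  rw [FormalMultilinearSeries.sum,
    ← Nat.succ_injective.tsum_eq (f := fun k => hamiltonianSeries h k fun _ => I)]
  · simp only [Nat.succ_eq_add_one, hamiltonianSeries, HomPoly.toMultilinear_apply_const]
  · rintro (_ | k) hk
    · exact absurd hk (by simp [hamiltonianSeries])
    · exact ⟨k, rfl⟩

lemma differentiableOn_tsum_evalHomC (hn : 0 < n) (hb : h ∈ hilbertBrick n) :
    DifferentiableOn ℂ (fun I => ∑' k, evalHomC (h k) I) (ball 0 (Real.sqrt n)⁻¹) := by
  have hr := ofReal_inv_sqrt_le_radius_hamiltonianSeries hn hb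
  have hpos : 0 < (hamiltonianSeries h).radius :=
    (ENNReal.ofReal_pos.2 (by positivity)).trans_le hr
  have hball : ball (0 : Fin n → ℂ) (Real.sqrt n)⁻¹ ⊆ eball 0 (hamiltonianSeries h).radius := by
    rw [← Metric.eball_ofReal]; exact eball_subset_eball hr
  exact (((hamiltonianSeries h).hasFPowerSeriesOnBall hpos).differentiableOn.mono hball).congr
    fun I _ => tsum_evalHomC_eq_sum_hamiltonianSeries I

end Hamiltonian

section Phase

variable {n k : ℕ}

lemma norm_cactions_le (z : CPhase n) : ‖cactions z‖ ≤ ‖z‖ ^ 2 := by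
  refine pi_norm_le_iff_of_nonneg (by positivity) |>.2 fun i => ?_
  have h1 : ‖z.1 i‖ ≤ ‖z‖ := (norm_le_pi_norm z.1 i).trans (norm_fst_le z)
  have h2 : ‖z.2 i‖ ≤ ‖z‖ := (norm_le_pi_norm z.2 i).trans (norm_snd_le z)
  calc ‖cactions z i‖ ≤ (‖z.1 i‖ ^ 2 + ‖z.2 i‖ ^ 2) / 2 := by
        rw [cactions, norm_div, Complex.norm_ofNat, ← norm_pow, ← norm_pow]
        gcongr
        exact norm_add_le _ _
    _ ≤ ‖z‖ ^ 2 := by nlinarith [norm_nonneg (z.1 i), norm_nonneg (z.2 i)]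

lemma differentiable_cactions : Differentiable ℂ (cactions : CPhase n → Fin n → ℂ) := by
  unfold cactions; fun_prop

lemma norm_evalHomC_cactions_le {p : HomPoly n k} (hp : bombieriNormSq p ≤ 1) {z : CPhase n}
    {t : ℝ} (hz : ‖z‖ ≤ t) : ‖evalHomC p (cactions z)‖ ≤ (Real.sqrt n * t ^ 2) ^ k := by
  refine (norm_evalHomC_le p _).trans <|
    (mul_le_of_le_one_left (by positivity) (Real.sqrt_le_one.2 hp)).trans ?_
  gcongr
  exact (norm_cactions_le z).trans (by gcongr)

lemma im_evalHomC_cactions_embedR (p : HomPoly n k) (w : RPhase n) :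
    (evalHomC p (cactions (embedR w))).im = 0 := by
  have : evalHomC p (cactions (embedR w)) =
      ((∑ m : Sym (Fin n) k, p m * ∏ i, ((w.1 i ^ 2 + w.2 i ^ 2) / 2) ^
        Multiset.count i (m : Multiset (Fin n)) : ℝ) : ℂ) := by
    simp only [evalHomC, cactions, embedR]
    push_cast
    rfl
  rw [this, Complex.ofReal_im]

lemma realOnRealOn_tsum_evalHomC_cactions (h : ∀ k : ℕ, HomPoly n (k + 1))
    (S : Set (CPhase n)) : RealOnRealOn (fun z => ∑' k, evalHomC (h k) (cactions z)) S := by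
  intro w _
  dsimp only
  have hreal : ∀ k, evalHomC (h k) (cactions (embedR w)) =
      ((evalHomC (h k) (cactions (embedR w))).re : ℂ) := fun k =>
    Complex.ext rfl (by rw [Complex.ofReal_im, im_evalHomC_cactions_embedR])
  rw [tsum_congr hreal, ← Complex.ofReal_tsum, Complex.ofReal_im]

lemma differentiableOn_tsum_evalHomC_cactions (hn : 0 < n) {h : ∀ k : ℕ, HomPoly n (k + 1)}
    (hb : h ∈ hilbertBrick n) {s : ℝ} (hsn : Real.sqrt n * s ^ 2 < 1) :
    DifferentiableOn ℂ (fun z => ∑' k, evalHomC (h k) (cactions z)) (closedBall 0 s) := by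
  refine (differentiableOn_tsum_evalHomC hn hb).comp differentiable_cactions.differentiableOn
    fun z hz => ?_
  rw [mem_closedBall_zero_iff] at hz
  rw [mem_ball_zero_iff]
  calc ‖cactions z‖ ≤ s ^ 2 := (norm_cactions_le z).trans (by gcongr)
    _ < (Real.sqrt n)⁻¹ := by
      rw [← one_div, lt_div_iff₀' (by positivity)]
      exact hsn

end Phase

section Brick

variable {n k : ℕ}

lemma continuous_bombieriNormSq : Continuous (bombieriNormSq : HomPoly n k → ℝ) :=
  continuous_finsetSum _ fun m _ => ((continuous_apply m).pow 2).div_const _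

lemma isCompact_bombieriUnitBall : IsCompact (bombieriUnitBall n k) := by
  refine (isCompact_univ_pi fun m => isCompact_Icc (a := -Real.sqrt (multinomCoeff m))
    (b := Real.sqrt (multinomCoeff m))).of_isClosed_subset
    (isClosed_le continuous_bombieriNormSq continuous_const) fun p hp m _ => ?_
  have hC : (0 : ℝ) < multinomCoeff m := by exact_mod_cast Nat.multinomial_pos _ _
  have hm : p m ^ 2 / multinomCoeff m ≤ 1 :=
    (Finset.single_le_sum (f := fun m => p m ^ 2 / (multinomCoeff m : ℝ))
      (fun m _ => by positivity) (Finset.mem_univ m)).trans hp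
  exact abs_le.1 (Real.abs_le_sqrt ((div_le_one hC).1 hm))

instance (n k : ℕ) : IsFiniteMeasure (muk n k) where
  measure_univ_lt_top := by
    rw [muk, Measure.smul_apply, Measure.restrict_apply_univ, smul_eq_mul]
    exact (ENNReal.inv_mul_le_one _).trans_lt ENNReal.one_lt_top

lemma ae_mem_bombieriUnitBall : ∀ᵐ p ∂muk n k, p ∈ bombieriUnitBall n k :=
  Measure.ae_smul_measure (ae_restrict_mem isCompact_bombieriUnitBall.measurableSet) _

lemma isCompact_hilbertBrick : IsCompact (hilbertBrick n) := by
  have : hilbertBrick n = Set.pi univ fun k => bombieriUnitBall n (k + 1) := by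
    ext h; simp [hilbertBrick, bombieriUnitBall]
  exact this ▸ isCompact_univ_pi fun _ => isCompact_bombieriUnitBall

end Brick

lemma ae_forall_mem_of_map_restrict_eq_pi {α : ℕ → Type*} [∀ k, MeasurableSpace (α k)]
    {μ : Measure (∀ k, α k)} {ν : ∀ k, Measure (α k)} [∀ k, SigmaFinite (ν k)]
    (hμ : ∀ m : ℕ, μ.map (fun x (k : Fin m) => x k) = Measure.pi fun k : Fin m => ν k)
    {S : ∀ k, Set (α k)} (hS : ∀ k, ∀ᵐ y ∂ν k, y ∈ S k) : ∀ᵐ x ∂μ, ∀ k, x k ∈ S k := by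
  refine ae_all_iff.2 fun k => ?_
  have hπ : Measurable fun (x : ∀ k, α k) (j : Fin (k + 1)) => x j :=
    measurable_pi_lambda _ fun j => measurable_pi_apply _
  refine ae_of_ae_map (p := fun y => y (Fin.last k) ∈ S k) hπ.aemeasurable ?_
  rw [hμ]
  exact Measure.tendsto_eval_ae_ae.eventually (hS k)

lemma ae_mem_hilbertBrick {n : ℕ} {μ : Measure (∀ k : ℕ, HomPoly n (k + 1))}
    (hμ : ∀ m : ℕ, Measure.map (fun h (k : Fin m) => h k) μ =
      Measure.pi fun k : Fin m => muk n (k + 1)) :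
    ∀ᵐ h ∂μ, h ∈ hilbertBrick n :=
  ae_forall_mem_of_map_restrict_eq_pi (ν := fun k => muk n (k + 1)) hμ
    fun _ => ae_mem_bombieriUnitBall

lemma aemeasurable_and_map_compl_image_eq_zero {X Y : Type*} [TopologicalSpace X]
    [MeasurableSpace X] [OpensMeasurableSpace X] [T2Space X] [TopologicalSpace Y]
    [MeasurableSpace Y] [BorelSpace Y] [T2Space Y] {μ : Measure X} {S : Set X} {f : X → Y}
    (hS : IsCompact S) (hf : ContinuousOn f S) (hμS : ∀ᵐ x ∂μ, x ∈ S) :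
    AEMeasurable f μ ∧ μ.map f (f '' S)ᶜ = 0 := by
  have hmeas : AEMeasurable f μ :=
    Measure.restrict_eq_self_of_ae_mem hμS ▸ hf.aemeasurable hS.measurableSet
  refine ⟨hmeas, ?_⟩
  rw [Measure.map_apply_of_aemeasurable hmeas
    (hS.image_of_continuousOn hf).isClosed.measurableSet.compl]
  exact measure_mono_null (fun x hx hxS => hx (mem_image_of_mem f hxS)) (ae_iff.1 hμS)

lemma hasSum_pow_succ_of_lt_one {ρ : ℝ} (h0 : 0 ≤ ρ) (h1 : ρ < 1) :
    HasSum (fun k : ℕ => ρ ^ (k + 1)) (ρ / (1 - ρ)) := by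
  simpa only [pow_succ', div_eq_mul_inv] using (hasSum_geometric_of_lt_one h0 h1).mul_left ρ

section Embedding

variable {n : ℕ} {s : ℝ}

def evalOnBall (n : ℕ) (s : ℝ) (k : ℕ) : HomPoly n k →ₗ[ℝ] C(closedBall (0 : CPhase n) s, ℂ) where
  toFun p := ⟨fun z => evalHomC p (cactions (z : CPhase n)), by
    unfold evalHomC cactions; fun_prop⟩
  map_add' p q := by
    ext z
    simp [evalHomC, Finset.sum_add_distrib, add_mul]
  map_smul' c p := by
    ext z
    simp [evalHomC, Finset.mul_sum, mul_assoc]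

lemma continuous_evalOnBall (k : ℕ) : Continuous (evalOnBall n s k) :=
  LinearMap.continuous_of_finiteDimensional _

lemma norm_evalOnBall_le {k : ℕ} {p : HomPoly n k} (hp : bombieriNormSq p ≤ 1) :
    ‖evalOnBall n s k p‖ ≤ (Real.sqrt n * s ^ 2) ^ k :=
  (ContinuousMap.norm_le _ (by positivity)).2 fun z =>
    norm_evalHomC_cactions_le hp (mem_closedBall_zero_iff.1 z.2)

/-- The embedding `ι`; off the brick the `tsum` may take the junk value `0`. -/
def brickEmbedding (s : ℝ) (h : ∀ k : ℕ, HomPoly n (k + 1)) : C(closedBall (0 : CPhase n) s, ℂ) :=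
  ∑' k, evalOnBall n s (k + 1) (h k)

lemma brickEmbedding_apply {h : ∀ k : ℕ, HomPoly n (k + 1)} (hb : h ∈ hilbertBrick n)
    (hsn : Real.sqrt n * s ^ 2 < 1) (z : closedBall (0 : CPhase n) s) :
    brickEmbedding s h z = ∑' k, evalHomC (h k) (cactions (z : CPhase n)) := by
  have hsum : Summable fun k => evalOnBall n s (k + 1) (h k) :=
    (hasSum_pow_succ_of_lt_one (by positivity) hsn).summable.of_norm_bounded
      fun k => norm_evalOnBall_le (hb k)
  exact (ContinuousMap.tsum_apply hsum z).symm

lemma continuousOn_brickEmbedding (hsn : Real.sqrt n * s ^ 2 < 1) :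
    ContinuousOn (brickEmbedding (n := n) s) (hilbertBrick n) :=
  (tendstoUniformlyOn_tsum_nat (hasSum_pow_succ_of_lt_one (by positivity) hsn).summable
    (s := hilbertBrick n) fun k _ hb => norm_evalOnBall_le (hb k)).continuousOn <|
      Frequently.of_forall fun _ => (continuous_finsetSum _ fun k _ =>
        (continuous_evalOnBall (k + 1)).comp (continuous_apply k)).continuousOn

end Embedding

theorem hilbert_brick_compact_embedding_general
    {n : ℕ} (hn : 1 ≤ n) (s : ℝ)
    (hsn : Real.sqrt n * s ^ 2 < 1)
    (F : (∀ k : ℕ, HomPoly n (k + 1)) → CPhase n → ℂ)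
    (hF : ∀ h z, F h z = ∑' k : ℕ, evalHomC (h k) (cactions z))
    (Brick : Set (∀ k : ℕ, HomPoly n (k + 1)))
    (hBrick : Brick = {h | ∀ k, bombieriNormSq (h k) ≤ 1})
    (μ : Measure (∀ k : ℕ, HomPoly n (k + 1))) [IsProbabilityMeasure μ]
    (hμ : ∀ m : ℕ, Measure.map (fun h (k : Fin m) => h k) μ =
      Measure.pi fun k : Fin m => muk n (k + 1)) :
    (∀ h ∈ Brick,
      TendstoUniformlyOn
        (fun (N : ℕ) (z : CPhase n) => ∑ k ∈ Finset.range N, evalHomC (h k) (cactions z))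
        (F h) atTop (closedBall 0 s)) ∧
    (∀ h ∈ Brick,
      DifferentiableOn ℂ (F h) (closedBall 0 s) ∧
      RealOnRealOn (F h) (closedBall 0 s) ∧
      ∀ z ∈ closedBall (0 : CPhase n) s,
        ‖F h z‖ ≤ Real.sqrt n * s ^ 2 / (1 - Real.sqrt n * s ^ 2)) ∧
    (letI : MeasurableSpace C(closedBall (0 : CPhase n) s, ℂ) := borel _
     ∃ ι : (∀ k : ℕ, HomPoly n (k + 1)) → C(closedBall (0 : CPhase n) s, ℂ),
       (∀ h ∈ Brick, ∀ z : closedBall (0 : CPhase n) s, ι h z = F h (z : CPhase n)) ∧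
       ContinuousOn ι Brick ∧
       IsCompact (ι '' Brick) ∧
       IsProbabilityMeasure (μ.map ι) ∧
       ∃ K : Set C(closedBall (0 : CPhase n) s, ℂ), IsCompact K ∧ μ.map ι Kᶜ = 0) := by
  obtain rfl : Brick = hilbertBrick n := hBrick
  obtain rfl : F = fun h z => ∑' k, evalHomC (h k) (cactions z) := funext fun h => funext (hF h)
  have hρ := hasSum_pow_succ_of_lt_one (by positivity) hsn
  have hterm : ∀ h ∈ hilbertBrick n, ∀ k, ∀ z ∈ closedBall (0 : CPhase n) s,
      ‖evalHomC (h k) (cactions z)‖ ≤ (Real.sqrt n * s ^ 2) ^ (k + 1) :=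
    fun h hb k z hz => norm_evalHomC_cactions_le (hb k) (mem_closedBall_zero_iff.1 hz)
  refine ⟨fun h hb => tendstoUniformlyOn_tsum_nat hρ.summable (hterm h hb),
    fun h hb => ⟨differentiableOn_tsum_evalHomC_cactions hn hb hsn,
      realOnRealOn_tsum_evalHomC_cactions h _,
      fun z hz => tsum_of_norm_bounded hρ (hterm h hb · z hz)⟩, ?_⟩
  let _ : MeasurableSpace C(closedBall (0 : CPhase n) s, ℂ) := borel _
  have : BorelSpace C(closedBall (0 : CPhase n) s, ℂ) := ⟨rfl⟩
  have hcont := continuousOn_brickEmbedding (n := n) hsn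
  have himage := isCompact_hilbertBrick.image_of_continuousOn hcont
  obtain ⟨hmeas, hnull⟩ :=
    aemeasurable_and_map_compl_image_eq_zero isCompact_hilbertBrick hcont (ae_mem_hilbertBrick hμ)
  exact ⟨brickEmbedding s, fun h hb z => brickEmbedding_apply hb hsn z, hcont, himage,
    Measure.isProbabilityMeasure_map hmeas, _, himage, hnull⟩

/-- **Compact embedding of the Hilbert brick into the space of analytic Hamiltonians.**
If `√n·s² < 1` then for every `h` in the Hilbert brick the series `Σ_k h_k(I(z))` converges
uniformly on `D_s` to a holomorphic function of sup norm `≤ √n s²/(1−√n s²)`, real for real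
arguments; the resulting map `ι` into `C(D_s, ℂ)` (sup-norm topology) is continuous on the
brick for the product topology, its image is compact, and the pushforward `ι_*μ` of the
product probability measure is a compactly supported Borel probability measure. -/
theorem hilbert_brick_compact_embedding
    {n : ℕ} (hn : 1 ≤ n) (s : ℝ) (hs0 : 0 < s) (hs1 : s < 1)
    (hsn : Real.sqrt n * s ^ 2 < 1)
    (F : (∀ k : ℕ, HomPoly n (k + 1)) → CPhase n → ℂ)
    (hF : ∀ h z, F h z = ∑' k : ℕ, evalHomC (h k) (cactions z))
    (Brick : Set (∀ k : ℕ, HomPoly n (k + 1)))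
    (hBrick : Brick = {h | ∀ k, bombieriNormSq (h k) ≤ 1})
    (μ : Measure (∀ k : ℕ, HomPoly n (k + 1))) [IsProbabilityMeasure μ]
    (hμ : ∀ m : ℕ, Measure.map (fun h (k : Fin m) => h k) μ =
      Measure.pi fun k : Fin m => muk n (k + 1)) :
    (∀ h ∈ Brick,
      TendstoUniformlyOn
        (fun (N : ℕ) (z : CPhase n) => ∑ k ∈ Finset.range N, evalHomC (h k) (cactions z))
        (F h) atTop (closedBall 0 s)) ∧
    (∀ h ∈ Brick,
      DifferentiableOn ℂ (F h) (closedBall 0 s) ∧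
      RealOnRealOn (F h) (closedBall 0 s) ∧
      ∀ z ∈ closedBall (0 : CPhase n) s,
        ‖F h z‖ ≤ Real.sqrt n * s ^ 2 / (1 - Real.sqrt n * s ^ 2)) ∧
    (letI : MeasurableSpace C(closedBall (0 : CPhase n) s, ℂ) := borel _
     ∃ ι : (∀ k : ℕ, HomPoly n (k + 1)) → C(closedBall (0 : CPhase n) s, ℂ),
       (∀ h ∈ Brick, ∀ z : closedBall (0 : CPhase n) s, ι h z = F h (z : CPhase n)) ∧
       ContinuousOn ι Brick ∧
       IsCompact (ι '' Brick) ∧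
       IsProbabilityMeasure (μ.map ι) ∧
       ∃ K : Set C(closedBall (0 : CPhase n) s, ℂ), IsCompact K ∧ μ.map ι Kᶜ = 0) :=
  hilbert_brick_compact_embedding_general hn s hsn F hF Brick hBrick μ hμ
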